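/- arXiv:2312.12049 — 7 statements merged into one kernel-verified Lean document; each statement's English description precedes it below -/
import Mathlib

section
/- Correctness under all secret keys: in a cyclic group G of prime order q, with g₂ = g₁^t, h = g₁^{a₁} g₂^{b₁}, and for each j the secret key (aⱼ, bⱼ) where aⱼ = a₁ + (b₁ - bⱼ)·t, decryption of any well-formed ciphertext (g₁^r, g₂^r, h^r · m) with any secret key (aⱼ, bⱼ) returns m. -/
private lemma pow_val_add {G : Type*} [CommGroup G] {q : ℕ} (hq : q.Prime)
    (g : G) (hord : orderOf g = q) (x y : ZMod q) :
    g ^ (x + y).val = g ^ x.val * g ^ y.val := by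
  haveI : NeZero q := ⟨hq.ne_zero⟩
  rw [← pow_add, pow_eq_pow_iff_modEq, hord]
  simp [Nat.ModEq, ZMod.val_add]

private lemma pow_val_mul {G : Type*} [CommGroup G] {q : ℕ} (hq : q.Prime)
    (g : G) (hord : orderOf g = q) (x y : ZMod q) :
    g ^ (x * y).val = (g ^ x.val) ^ y.val := by
  haveI : NeZero q := ⟨hq.ne_zero⟩
  rw [← pow_mul, pow_eq_pow_iff_modEq, hord]
  simpa [Nat.ModEq, ZMod.val_mul] using (Nat.mod_mod_self ..).symm

/-- Correctness under all secret keys: every key `(aⱼ, bⱼ)` with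
`aⱼ = a₁ + (b₁ - bⱼ)·t` decrypts every well-formed ciphertext
`(g₁^r, g₂^r, h^r·m)` to `m`. -/
theorem stmt_2 {G : Type*} [CommGroup G] {q : ℕ} (hq : q.Prime)
    (g₁ : G) (hord : orderOf g₁ = q)
    (t : ZMod q) (ht : t ≠ 0) (g₂ : G) (hg₂ : g₂ = g₁ ^ t.val)
    (a₁ b₁ : ZMod q) (h : G) (hh : h = g₁ ^ a₁.val * g₂ ^ b₁.val)
    {P : ℕ} (a b : Fin P → ZMod q)
    (ha : ∀ j, a j = a₁ + (b₁ - b j) * t) :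
    ∀ (j : Fin P) (r : ZMod q) (m : G),
      (h ^ r.val * m) / ((g₁ ^ r.val) ^ (a j).val * (g₂ ^ r.val) ^ (b j).val) = m := by
  intro j r m
  have key : h ^ r.val = (g₁ ^ r.val) ^ (a j).val * (g₂ ^ r.val) ^ (b j).val := by
    rw [hh, hg₂, ← pow_val_mul hq g₁ hord t b₁,
        ← pow_val_add hq g₁ hord a₁ (t * b₁),
        ← pow_val_mul hq g₁ hord _ r,
        ← pow_val_mul hq g₁ hord r (a j),
        ← pow_val_mul hq g₁ hord t r,
        ← pow_val_mul hq g₁ hord (t * r) (b j),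
        ← pow_val_add hq g₁ hord]
    congr 1
    rw [ha j]; ring
  rw [key, mul_comm, mul_div_assoc, div_self', mul_one]
end

section
/- Ill-formed ciphertexts distinguish secret keys: let G be a cyclic group of prime order q with generator g₁ of order q, g₂ = g₁^t with t ≠ 0, and let (a_{j₁}, b_{j₁}), (a_{j₂}, b_{j₂}) be two CS_lite secret keys with b_{j₁} ≠ b_{j₂} (and a_{jᵢ} = a₁ + (b₁ - b_{jᵢ})·t). Then for any ill-formed ciphertext (g₁^{r₁}, g₂^{r₂}, u₃) with r₁ ≠ r₂ and u₃ ∈ G, the decryptions under the two keys differ: u₃ / (g₁^{r₁·a_{j₁}} g₂^{r₂·b_{j₁}}) ≠ u₃ / (g₁^{r₁·a_{j₂}} g₂^{r₂·b_{j₂}}). -/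
/-- Ill-formed ciphertexts distinguish secret keys: decrypting an ill-formed
ciphertext `(g₁^{r₁}, g₂^{r₂}, u₃)` (with `r₁ ≠ r₂`) under two keys with
distinct `b`-components yields distinct messages. -/
theorem stmt_3 {G : Type*} [CommGroup G] {q : ℕ} (hq : q.Prime)
    (g₁ : G) (hord : orderOf g₁ = q)
    (t : ZMod q) (ht : t ≠ 0) (g₂ : G) (hg₂ : g₂ = g₁ ^ t.val)
    (a₁ b₁ : ZMod q)
    (aJ₁ bJ₁ aJ₂ bJ₂ : ZMod q) (hb : bJ₁ ≠ bJ₂)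
    (haJ₁ : aJ₁ = a₁ + (b₁ - bJ₁) * t) (haJ₂ : aJ₂ = a₁ + (b₁ - bJ₂) * t)
    (r₁ r₂ : ZMod q) (hr : r₁ ≠ r₂) (u₃ : G) :
    u₃ / (g₁ ^ (r₁ * aJ₁).val * g₂ ^ (r₂ * bJ₁).val) ≠
      u₃ / (g₁ ^ (r₁ * aJ₂).val * g₂ ^ (r₂ * bJ₂).val) := by
  haveI : Fact q.Prime := ⟨hq⟩
  haveI : NeZero q := ⟨hq.ne_zero⟩
  -- key fact: exponentiation of g₁ by `val` reflects equality in ZMod q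
  have key : ∀ m n : ℕ, ((m : ZMod q) = (n : ZMod q)) → g₁ ^ m = g₁ ^ n := by
    intro m n h
    rw [pow_eq_pow_iff_modEq, hord]
    exact (ZMod.natCast_eq_natCast_iff _ _ _).mp h
  have keyinj : ∀ x y : ZMod q, g₁ ^ x.val = g₁ ^ y.val → x = y := by
    intro x y h
    rw [pow_eq_pow_iff_modEq, hord] at h
    have := (ZMod.natCast_eq_natCast_iff _ _ _).mpr h
    simpa [ZMod.natCast_val, ZMod.cast_id] using this
  have hcomb : ∀ x y : ZMod q,
      g₁ ^ x.val * g₂ ^ y.val = g₁ ^ (x + t * y).val := by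
    intro x y
    rw [hg₂, ← pow_mul, ← pow_add]
    apply key
    push_cast [ZMod.natCast_val, ZMod.cast_id]
    ring
  intro h
  apply hr
  have h2 : g₁ ^ (r₁ * aJ₁ + t * (r₂ * bJ₁)).val
      = g₁ ^ (r₁ * aJ₂ + t * (r₂ * bJ₂)).val := by
    rw [← hcomb, ← hcomb]
    exact div_right_injective h
  have h3 := keyinj _ _ h2
  rw [haJ₁, haJ₂] at h3
  have h4 : t * (bJ₁ - bJ₂) * (r₂ - r₁) = 0 := by ring_nf; ring_nf at h3; linear_combination h3
  have h5 := mul_eq_zero.mp h4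
  rcases h5 with h5 | h5
  · rcases mul_eq_zero.mp h5 with h6 | h6
    · exact absurd h6 ht
    · exact absurd (sub_eq_zero.mp h6) hb
  · exact (sub_eq_zero.mp h5).symm
end

section
/- Decryption of an ill-formed ciphertext factorizes: with g₂ = g₁^t, key (aⱼ, bⱼ) where aⱼ = a₁ + (b₁ - bⱼ)·t, and ill-formed ciphertext (g₁^{r₁}, g₂^{r₂}, u₃), one has g₁^{r₁·aⱼ} · g₂^{r₂·bⱼ} = g₁^{r₁·a₁} · g₂^{r₁·b₁} · g₂^{(r₂ - r₁)·bⱼ}. -/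
/-- Decryption of an ill-formed ciphertext factorizes:
`g₁^{r₁·aⱼ} · g₂^{r₂·bⱼ} = g₁^{r₁·a₁} · g₂^{r₁·b₁} · g₂^{(r₂-r₁)·bⱼ}`. -/
theorem stmt_4 {G : Type*} [CommGroup G] {q : ℕ} (hq : q.Prime)
    (g₁ : G) (hord : orderOf g₁ = q)
    (t : ZMod q) (g₂ : G) (hg₂ : g₂ = g₁ ^ t.val)
    (a₁ b₁ bj aj r₁ r₂ : ZMod q) (haj : aj = a₁ + (b₁ - bj) * t) :
    g₁ ^ (r₁ * aj).val * g₂ ^ (r₂ * bj).val =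
      g₁ ^ (r₁ * a₁).val * g₂ ^ (r₁ * b₁).val * g₂ ^ ((r₂ - r₁) * bj).val := by
  have hpow : ∀ m n : ℕ, (m : ZMod q) = n → g₁ ^ m = g₁ ^ n := fun m n h => by
    rw [pow_eq_pow_iff_modEq, hord]
    exact (ZMod.natCast_eq_natCast_iff _ _ _).mp h
  haveI : Fact q.Prime := ⟨hq⟩
  subst hg₂
  rw [← pow_mul, ← pow_mul, ← pow_mul, ← pow_add, ← pow_add, ← pow_add]
  apply hpow
  push_cast [ZMod.natCast_val]
  simp only [ZMod.cast_id', id]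
  subst haj
  ring
end

section
/- Perfect masking in the non-DDH case: let q be prime, a, b, c ∈ ZMod q with c ≠ a·b. If (a₁, b₁) is chosen uniformly at random in (ZMod q)², then conditioned on the value of a₁ + a·b₁, the value b·a₁ + c·b₁ is uniformly distributed on ZMod q. -/
/-!
The pair map `(a₁, b₁) ↦ (a₁ + a·b₁, b·a₁ + c·b₁)` is linear with matrix `!![1, a; b, c]`, whose
determinant `c - a·b` is nonzero, so over the field `ZMod q` it is a bijection of the plane. A
bijective pair map restricts, on each fiber of its first component, to a bijection of its second
component onto the whole codomain.
-/

open Function Set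

theorem Set.bijOn_univ_of_bijective_prodMk {α β γ : Type*} {g : α → β} {f : α → γ}
    (h : Bijective fun p => (g p, f p)) (y : β) : BijOn f {p | g p = y} univ := by
  refine ⟨mapsTo_univ _ _, fun p hp p' hp' hf => h.1 (Prod.ext (hp.trans hp'.symm) hf), ?_⟩
  intro z _
  obtain ⟨p, hp⟩ := h.2 (y, z)
  exact ⟨p, congrArg Prod.fst hp, congrArg Prod.snd hp⟩

theorem bijective_linear_pair_of_ne_mul {K : Type*} [Field K] {a b c : K} (hc : c ≠ a * b) :
    Bijective fun p : K × K => (p.1 + a * p.2, b * p.1 + c * p.2) := by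
  have hd : c - a * b ≠ 0 := sub_ne_zero.mpr hc
  -- Cramer's rule: eliminating the first coordinate leaves `m - b·h = (c - a·b)·y`.
  refine bijective_iff_has_inverse.mpr
    ⟨fun r => (r.1 - a * ((r.2 - b * r.1) / (c - a * b)), (r.2 - b * r.1) / (c - a * b)), ?_, ?_⟩
  · rintro ⟨x, y⟩
    have hy : (b * x + c * y - b * (x + a * y)) / (c - a * b) = y := by
      rw [div_eq_iff hd]; ring
    ext <;> simp only [hy]; ring
  · rintro ⟨h, m⟩
    have hm : b * h + (c - a * b) * ((m - b * h) / (c - a * b)) = m := by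
      rw [mul_div_cancel₀ _ hd]; ring
    ext
    · ring
    · linear_combination hm

/-- Perfect masking in the non-DDH case: conditioned on `a₁ + a·b₁ = h'`, the
map `(a₁,b₁) ↦ b·a₁ + c·b₁` is a bijection onto `ZMod q`, so for uniformly
random `(a₁,b₁)` the mask `b·a₁ + c·b₁` is uniform given `a₁ + a·b₁`. -/
theorem stmt_7 {q : ℕ} (hq : q.Prime) (a b c : ZMod q) (hc : c ≠ a * b) :
    ∀ h' : ZMod q,
      Set.BijOn (fun p : ZMod q × ZMod q => b * p.1 + c * p.2)
        {p : ZMod q × ZMod q | p.1 + a * p.2 = h'} Set.univ := by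
  have : Fact q.Prime := ⟨hq⟩
  exact Set.bijOn_univ_of_bijective_prodMk (bijective_linear_pair_of_ne_mul hc)
end

section
/- Incremental key generation preserves correctness: given an existing CS_lite key setup (g₂ = g₁^t, h = g₁^{a₁}g₂^{b₁}, keys (aⱼ,bⱼ) with aⱼ = a₁ + (b₁−bⱼ)t for j ≤ P), a new key (a_{P+1}, b_{P+1}) with b_{P+1} ∉ {b₁,…,b_P} and a_{P+1} = a₁ + (b₁ − b_{P+1})·t satisfies: (1) g₁^{a_{P+1}} g₂^{b_{P+1}} = h, so it correctly decrypts all well-formed ciphertexts; and (2) for any ill-formed ciphertext (g₁^{r₁}, g₂^{r₂}, u₃) with r₁ ≠ r₂, its decryption differs from that of every existing key skⱼ, j ≤ P. -/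
/-- Incremental key generation preserves correctness: a new key
`(a_{P+1}, b_{P+1})` with `b_{P+1} ∉ {b₁,…,b_P}` and
`a_{P+1} = a₁ + (b₁ − b_{P+1})·t` (1) satisfies `g₁^{a_{P+1}} g₂^{b_{P+1}} = h`
(hence decrypts all well-formed ciphertexts correctly), and (2) decrypts every
ill-formed ciphertext differently from every existing key. -/
theorem stmt_13 {G : Type*} [CommGroup G] {q : ℕ} (hq : q.Prime)
    (g₁ : G) (hord : orderOf g₁ = q)
    (t : ZMod q) (ht : t ≠ 0) (g₂ : G) (hg₂ : g₂ = g₁ ^ t.val)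
    (a₁ b₁ : ZMod q) (h : G) (hh : h = g₁ ^ a₁.val * g₂ ^ b₁.val)
    {P : ℕ} (a b : Fin P → ZMod q)
    (ha : ∀ j, a j = a₁ + (b₁ - b j) * t)
    (bNew : ZMod q) (hbNew : ∀ j, bNew ≠ b j)
    (aNew : ZMod q) (haNew : aNew = a₁ + (b₁ - bNew) * t) :
    (g₁ ^ aNew.val * g₂ ^ bNew.val = h ∧
      ∀ (r : ZMod q) (m : G),
        (h ^ r.val * m) / ((g₁ ^ r.val) ^ aNew.val * (g₂ ^ r.val) ^ bNew.val) = m) ∧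
    ∀ (j : Fin P) (r₁ r₂ : ZMod q) (u₃ : G), r₁ ≠ r₂ →
      u₃ / ((g₁ ^ r₁.val) ^ aNew.val * (g₂ ^ r₂.val) ^ bNew.val) ≠
        u₃ / ((g₁ ^ r₁.val) ^ (a j).val * (g₂ ^ r₂.val) ^ (b j).val) := by

  haveI : Fact q.Prime := ⟨hq⟩
  haveI : NeZero q := ⟨hq.pos.ne'⟩
  set F : ZMod q → G := fun x => g₁ ^ x.val with hF
  have Fadd : ∀ x y : ZMod q, F (x + y) = F x * F y := by
    intro x y
    simp only [hF]
    rw [← pow_add, ZMod.val_add]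
    have hp := pow_mod_orderOf g₁ (x.val + y.val)
    rw [hord] at hp
    exact hp
  have Fpow : ∀ x y : ZMod q, (F x) ^ y.val = F (x * y) := by
    intro x y
    simp only [hF]
    rw [← pow_mul, ZMod.val_mul]
    have hp := pow_mod_orderOf g₁ (x.val * y.val)
    rw [hord] at hp
    exact hp.symm
  have Finj : Function.Injective F := by
    intro x y hxy
    simp only [hF] at hxy
    have hmod := (pow_eq_pow_iff_modEq.mp hxy)
    rw [hord] at hmod
    have : x.val = y.val := by
      have hx := ZMod.val_lt x
      have hy := ZMod.val_lt y
      unfold Nat.ModEq at hmod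
      rwa [Nat.mod_eq_of_lt hx, Nat.mod_eq_of_lt hy] at hmod
    exact ZMod.val_injective q this
  have hg₂' : g₂ = F t := hg₂
  have term : ∀ (x y r₁ r₂ : ZMod q),
      (g₁ ^ r₁.val) ^ x.val * (g₂ ^ r₂.val) ^ y.val = F (r₁ * x + t * r₂ * y) := by
    intro x y r₁ r₂
    have h1 : (g₁ ^ r₁.val) = F r₁ := rfl
    have h2 : (g₂ ^ r₂.val) = F (t * r₂) := by rw [hg₂', Fpow]
    rw [h1, h2, Fpow, Fpow, ← Fadd, mul_assoc]
  have hh' : h = F (a₁ + t * b₁) := by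
    rw [hh, hg₂', Fpow, ← Fadd]
  have key1 : g₁ ^ aNew.val * g₂ ^ bNew.val = h := by
    have : (g₁ : G) ^ aNew.val = F aNew := rfl
    rw [this, hg₂', Fpow, ← Fadd, hh']
    congr 1
    rw [haNew]; ring
  refine ⟨⟨key1, ?_⟩, ?_⟩
  · intro r m
    have hd : (g₁ ^ r.val) ^ aNew.val * (g₂ ^ r.val) ^ bNew.val = h ^ r.val := by
      rw [term, hh', Fpow]
      congr 1
      rw [haNew]; ring
    rw [hd, mul_div_cancel_left]
  · intro j r₁ r₂ u₃ hr heq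
    rw [term, term, div_eq_mul_inv, div_eq_mul_inv] at heq
    have heq' := Finj (inv_injective (mul_left_cancel heq))
    rw [haNew, ha j] at heq'
    have hz : t * (r₂ - r₁) * (bNew - b j) = 0 := by linear_combination heq'
    rcases mul_eq_zero.mp hz with hz1 | hz2
    · rcases mul_eq_zero.mp hz1 with h1 | h2
      · exact ht h1
      · exact hr (sub_eq_zero.mp h2).symm
    · exact hbNew j (sub_eq_zero.mp hz2)
end

section
/- Characterization of decryption-equivalent keys: in the CS_lite setting with g₁ of prime order q and t ≠ 0, two keys (a, b) and (a', b') decrypt every well-formed ciphertext (g₁^r, g₂^r, h^r m) to the same message for all r and m if and only if a + t·b = a' + t·b' (in ZMod q). -/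
lemma pow_eq_pow_zmod {G : Type*} [CommGroup G] {q : ℕ} (g : G)
    (hord : orderOf g = q) (n m : ℕ) :
    g ^ n = g ^ m ↔ (n : ZMod q) = (m : ZMod q) := by
  rw [pow_eq_pow_iff_modEq, hord, ← ZMod.natCast_eq_natCast_iff]

/-- Characterization of decryption-equivalent keys: `(a, b)` and `(a', b')`
decrypt every well-formed ciphertext to the same message iff
`a + t·b = a' + t·b'`. -/
theorem stmt_14 {G : Type*} [CommGroup G] {q : ℕ} (hq : q.Prime)
    (g₁ : G) (hord : orderOf g₁ = q)
    (t : ZMod q) (ht : t ≠ 0) (g₂ : G) (hg₂ : g₂ = g₁ ^ t.val)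
    (a₁ b₁ : ZMod q) (h : G) (hh : h = g₁ ^ a₁.val * g₂ ^ b₁.val)
    (a b a' b' : ZMod q) :
    (∀ (r : ZMod q) (m : G),
        (h ^ r.val * m) / ((g₁ ^ r.val) ^ a.val * (g₂ ^ r.val) ^ b.val) =
          (h ^ r.val * m) / ((g₁ ^ r.val) ^ a'.val * (g₂ ^ r.val) ^ b'.val)) ↔
      a + t * b = a' + t * b' := by
  haveI : NeZero q := ⟨hq.ne_zero⟩
  have key : ∀ (r : ZMod q) (x y u v : ZMod q),
      (g₁ ^ r.val) ^ x.val * (g₂ ^ r.val) ^ y.val =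
        (g₁ ^ r.val) ^ u.val * (g₂ ^ r.val) ^ v.val ↔
      r * (x + t * y) = r * (u + t * v) := by
    intro r x y u v
    simp only [hg₂, ← pow_mul, ← pow_add]
    rw [pow_eq_pow_zmod g₁ hord]
    push_cast [ZMod.natCast_val, ZMod.cast_id]
    constructor <;> intro e <;> linear_combination e
  constructor
  · intro H
    have h2 : (g₁ ^ (1 : ZMod q).val) ^ a.val * (g₂ ^ (1 : ZMod q).val) ^ b.val =
        (g₁ ^ (1 : ZMod q).val) ^ a'.val * (g₂ ^ (1 : ZMod q).val) ^ b'.val := by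
      have h1 := H 1 1
      exact div_right_injective h1
    have := (key 1 a b a' b').1 h2
    have hq1 : (1 : ℕ) < q := hq.one_lt
    simpa using this
  · intro H r m
    have : (g₁ ^ r.val) ^ a.val * (g₂ ^ r.val) ^ b.val =
        (g₁ ^ r.val) ^ a'.val * (g₂ ^ r.val) ^ b'.val := (key r a b a' b').2 (by rw [H])
    rw [this]
end

section
/- The number of secret keys decrypting correctly: in the CS_lite setting (g₁ of prime order q, g₂ = g₁^t with t ≠ 0, h = g₁^{a₁} g₂^{b₁}), the set of pairs (a,b) ∈ (ZMod q)² such that Dec((a,b), ·) correctly decrypts every well-formed ciphertext (i.e., g₁^a g₂^b = h) has exactly q elements, namely {(a₁ + (b₁ − b)·t, b) : b ∈ ZMod q}. -/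
/-- The number of secret keys decrypting correctly: the set of pairs `(a,b)`
with `g₁^a g₂^b = h` is exactly `{(a₁ + (b₁ − b)·t, b) : b ∈ ZMod q}` and has
exactly `q` elements. -/
theorem stmt_15 {G : Type*} [CommGroup G] {q : ℕ} (hq : q.Prime)
    (g₁ : G) (hord : orderOf g₁ = q)
    (t : ZMod q) (ht : t ≠ 0) (g₂ : G) (hg₂ : g₂ = g₁ ^ t.val)
    (a₁ b₁ : ZMod q) (h : G) (hh : h = g₁ ^ a₁.val * g₂ ^ b₁.val) :
    {p : ZMod q × ZMod q | g₁ ^ p.1.val * g₂ ^ p.2.val = h} =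
      Set.range (fun b : ZMod q => (a₁ + (b₁ - b) * t, b)) ∧
    Nat.card {p : ZMod q × ZMod q | g₁ ^ p.1.val * g₂ ^ p.2.val = h} = q := by
  haveI : NeZero q := ⟨hq.pos.ne'⟩
  have key : ∀ a b : ZMod q, g₁ ^ a.val * g₂ ^ b.val = h ↔ a + t * b = a₁ + t * b₁ := by
    intro a b
    rw [hh, hg₂, ← pow_mul, ← pow_mul, ← pow_add, ← pow_add,
      pow_eq_pow_iff_modEq, hord, ← ZMod.natCast_eq_natCast_iff]
    push_cast
    simp only [ZMod.natCast_val, ZMod.cast_id]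
  have hset : {p : ZMod q × ZMod q | g₁ ^ p.1.val * g₂ ^ p.2.val = h} =
      Set.range (fun b : ZMod q => (a₁ + (b₁ - b) * t, b)) := by
    ext ⟨a, b⟩
    simp only [Set.mem_setOf_eq, Set.mem_range, key, Prod.mk.injEq]
    constructor
    · intro hx
      exact ⟨b, by linear_combination -hx, rfl⟩
    · rintro ⟨c, h1, rfl⟩
      linear_combination -h1
  refine ⟨hset, ?_⟩
  rw [hset, Nat.card_range_of_injective (fun x y hxy => (Prod.mk.injEq _ _ _ _ ▸ hxy).2),
    Nat.card_eq_fintype_card, ZMod.card]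
end
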